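/- (Proposition: existence of a feasible direction in the intersection, α ≥ π case.) Let i be a vertex, D a finite set of directions at i (angles in [0,2π)), and T ⊆ D a nonempty set of 'tree' directions. For each v ∈ D let L_v := {v} ∪ {k ∈ D \ {v} : (θ_v − θ_k) mod 2π ≤ α}. Suppose there exist nonnegative reals (y_k)_{k ∈ D} with Σ_{k ∈ D} y_k = 1 and Σ_{k ∈ L_v} y_k ≥ 1 for all v ∈ T. Then there exists j ∈ T with j ∈ ⋂_{v ∈ T} L_v. -/
import Mathlib


open Real

noncomputable def amod (x : ℝ) : ℝ := toIcoMod Real.two_pi_pos 0 x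

noncomputable def ang (a b : ℝ) : ℝ := amod (b - a)

noncomputable def Lset (D : Finset ℝ) (α v : ℝ) : Finset ℝ :=
  insert v ((D.erase v).filter fun k => ang k v ≤ α)

lemma amod_mem (x : ℝ) : amod x ∈ Set.Ico 0 (2 * π) := by
  have := toIcoMod_mem_Ico Real.two_pi_pos 0 x
  simpa [amod] using this

lemma ang_nonneg (a b : ℝ) : 0 ≤ ang a b := (amod_mem _).1

lemma ang_lt (a b : ℝ) : ang a b < 2 * π := by
  have := (amod_mem (b - a)).2
  simpa [ang] using this

lemma ang_self (a : ℝ) : ang a a = 0 := by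
  simp only [ang, amod, sub_self]
  exact toIcoMod_apply_left Real.two_pi_pos 0

lemma ang_sub {k j v : ℝ} (h : ang k j ≤ ang k v) : ang j v = ang k v - ang k j := by
  unfold ang amod at *
  rw [toIcoMod_eq_iff Real.two_pi_pos]
  refine ⟨⟨by linarith, ?_⟩, ?_⟩
  · have h1 := (toIcoMod_mem_Ico Real.two_pi_pos 0 (v - k)).2
    have h2 := (toIcoMod_mem_Ico Real.two_pi_pos 0 (j - k)).1
    simp at h1 h2
    linarith
  · have e1 := toIcoMod_add_toIcoDiv_zsmul Real.two_pi_pos 0 (v - k)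
    have e2 := toIcoMod_add_toIcoDiv_zsmul Real.two_pi_pos 0 (j - k)
    refine ⟨toIcoDiv Real.two_pi_pos 0 (v - k) - toIcoDiv Real.two_pi_pos 0 (j - k), ?_⟩
    push_cast [sub_zsmul] at *
    linarith

lemma ang_eq_zero {k j : ℝ} (hk : k ∈ Set.Ico 0 (2 * π)) (hj : j ∈ Set.Ico 0 (2 * π))
    (h : ang k j = 0) : j = k := by
  unfold ang amod at h
  rw [toIcoMod_eq_iff Real.two_pi_pos] at h
  obtain ⟨-, z, hz⟩ := h
  simp at hz
  have hp := Real.two_pi_pos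
  rcases lt_trichotomy z 0 with h' | h' | h'
  · have hz1 : z ≤ -1 := by omega
    have : (z : ℝ) ≤ -1 := by exact_mod_cast hz1
    nlinarith [hk.1, hk.2, hj.1, hj.2]
  · subst h'; simp at hz; linarith
  · have : (1 : ℝ) ≤ (z : ℝ) := by exact_mod_cast h'
    nlinarith [hk.1, hk.2, hj.1, hj.2]

theorem stmt11 (α : ℝ) (hα : π ≤ α) (D : Finset ℝ) (hD : ∀ θ ∈ D, θ ∈ Set.Ico 0 (2 * π))
    (T : Finset ℝ) (hT : T.Nonempty) (hTD : T ⊆ D) (y : ℝ → ℝ)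
    (hy0 : ∀ k ∈ D, 0 ≤ y k) (hy1 : ∑ k ∈ D, y k = 1)
    (hyL : ∀ v ∈ T, 1 ≤ ∑ k ∈ Lset D α v, y k) :
    ∃ j ∈ T, ∀ v ∈ T, j ∈ Lset D α v := by
  -- L_v ⊆ D
  have hLsub : ∀ v ∈ T, Lset D α v ⊆ D := by
    intro v hv x hx
    rcases Finset.mem_insert.mp hx with h | h
    · exact h ▸ hTD hv
    · exact Finset.mem_of_mem_erase (Finset.mem_filter.mp h).1
  -- y vanishes outside each L_v
  have hzero : ∀ v ∈ T, ∀ k ∈ D, k ∉ Lset D α v → y k = 0 := by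
    intro v hv k hk hkL
    have hsplit : ∑ x ∈ D \ Lset D α v, y x = ∑ x ∈ D, y x - ∑ x ∈ Lset D α v, y x :=
      Finset.sum_sdiff_eq_sub (hLsub v hv)
    have h1 := hyL v hv
    have hle : ∑ x ∈ D \ Lset D α v, y x ≤ 0 := by rw [hsplit, hy1]; linarith
    have hz : ∀ x ∈ D \ Lset D α v, y x = 0 := by
      have hnn : ∀ x ∈ D \ Lset D α v, 0 ≤ y x := fun x hx =>
        hy0 x (Finset.mem_sdiff.mp hx).1
      have := Finset.sum_eq_zero_iff_of_nonneg hnn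
      exact this.mp (le_antisymm hle (Finset.sum_nonneg hnn))
    exact hz k (Finset.mem_sdiff.mpr ⟨hk, hkL⟩)
  -- some k with positive mass
  obtain ⟨k, hkD, hky⟩ : ∃ k ∈ D, y k ≠ 0 := by
    by_contra h
    push_neg at h
    have : ∑ x ∈ D, y x = 0 := Finset.sum_eq_zero h
    rw [hy1] at this; norm_num at this
  have hkL : ∀ v ∈ T, k ∈ Lset D α v := by
    intro v hv
    by_contra h
    exact hky (hzero v hv k hkD h)
  -- choose j ∈ T minimizing ang k ·
  obtain ⟨j, hjT, hjmin⟩ := T.exists_min_image (fun t => ang k t) hT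
  refine ⟨j, hjT, fun v hv => ?_⟩
  by_cases hjv : j = v
  · simp [Lset, hjv]
  have hangjv : ang j v ≤ α := by
    by_cases hkv : k = v
    · -- then k ∈ T, so ang k j = 0, so j = k = v, contradiction
      subst hkv
      have h0 : ang k j ≤ 0 := by simpa [ang_self] using hjmin k hv
      have : j = k := ang_eq_zero (hD k hkD) (hD j (hTD hjT))
        (le_antisymm h0 (ang_nonneg _ _))
      exact absurd this hjv
    · have hkv' : ang k v ≤ α := by
        have := hkL v hv
        rcases Finset.mem_insert.mp this with h | h
        · exact absurd h hkv
        · exact (Finset.mem_filter.mp h).2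
      have hmin := hjmin v hv
      have := ang_sub hmin
      have h0 := ang_nonneg k j
      linarith [this ▸ (by linarith : ang k v - ang k j ≤ α)]
  exact Finset.mem_insert_of_mem (Finset.mem_filter.mpr
    ⟨Finset.mem_erase.mpr ⟨hjv, hTD hjT⟩, hangjv⟩)
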